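/- Suppose ξ is a unit-speed curve in ℝ⁴ whose curvatures κ, k, r−κ are all constant (a w-curve), with κ > 0, k > 0. Then the Frenet frame of the involute φ(s) = ξ(s) + (c−s)T(s) (for c − s > 0) satisfies: T_φ = N_ξ, N_φ = (−κ T_ξ + k B_ξ)/√(κ²+k²), B_φ = ±E_ξ, E_φ = ±(k T_ξ + κ B_ξ)/√(κ²+k²). -/

import Mathlib

open scoped RealInnerProductSpace

/-!
Differentiating the involute gives `φ' = (c - s) κ N`, so `T_φ = N`. Each further Frenet
equation of `φ` is then obtained by differentiating the frame vector of `φ` already expressed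
in the frame of `ξ` and comparing with the Frenet equations of `ξ`: this forces
`N_φ ∥ -κ T + k B`, `B_φ ∥ E` and `E_φ ∥ k T + κ B`, and unit length fixes the scalars up to
sign. The sign of `B_φ` is that of `r - κ` at every point, so `B_φ = ± E` with a constant sign,
which is what allows it to be differentiated once more.
-/

open Set

section UnitVectors

variable {V : Type*} [NormedAddCommGroup V] [InnerProductSpace ℝ V]

lemma norm_smul_add_smul_of_inner_eq_zero {u v : V} (a b : ℝ) (hu : ‖u‖ = 1) (hv : ‖v‖ = 1)
    (huv : ⟪u, v⟫ = 0) : ‖a • u + b • v‖ = √(a ^ 2 + b ^ 2) := by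
  have h : ‖a • u + b • v‖ ^ 2 = a ^ 2 + b ^ 2 := by
    rw [norm_add_sq_real, real_inner_smul_left, real_inner_smul_right, huv,
      norm_smul, norm_smul, hu, hv]
    simp [sq_abs]
  rw [← h, Real.sqrt_sq (norm_nonneg _)]

lemma eq_norm_and_eq_inv_norm_smul_of_smul_eq {u v : V} {a : ℝ} (h : a • u = v) (hu : ‖u‖ = 1)
    (ha : 0 < a) : a = ‖v‖ ∧ u = ‖v‖⁻¹ • v := by
  have hv : ‖v‖ = a := by
    rw [← h, norm_smul, hu, mul_one, Real.norm_eq_abs, abs_of_pos ha]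
  refine ⟨hv.symm, ?_⟩
  rw [hv, ← h, smul_smul, inv_mul_cancel₀ ha.ne', one_smul]

lemma eq_abs_and_eq_sign_smul_of_smul_eq_smul {u w : V} {a b : ℝ} (h : a • u = b • w)
    (hu : ‖u‖ = 1) (hw : ‖w‖ = 1) (ha : 0 < a) : a = |b| ∧ u = (SignType.sign b : ℝ) • w := by
  obtain ⟨ha_eq, hu_eq⟩ := eq_norm_and_eq_inv_norm_smul_of_smul_eq h hu ha
  rw [norm_smul, hw, mul_one, Real.norm_eq_abs] at ha_eq hu_eq
  refine ⟨ha_eq, ?_⟩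
  rw [ha_eq] at ha
  rw [hu_eq, smul_smul]
  congr 1
  field_simp
  exact (abs_mul_sign b).symm

lemma sign_eq_one_or_eq_neg_one {x : ℝ} (hx : x ≠ 0) :
    (SignType.sign x : ℝ) = 1 ∨ (SignType.sign x : ℝ) = -1 := by
  rcases hx.lt_or_gt with h | h <;> simp [h]

lemma eq_or_eq_neg_of_smul_eq_smul {u w : V} {a b : ℝ} (h : a • u = b • w) (hu : ‖u‖ = 1)
    (hw : ‖w‖ = 1) (hb : b ≠ 0) : u = w ∨ u = -w := by
  have ha : a ≠ 0 := by
    rintro rfl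
    have : b • w = 0 := by rw [← h, zero_smul]
    rw [smul_eq_zero] at this
    rcases this with h0 | h0
    · exact hb h0
    · simp [h0] at hw
  have sign_cases {a b : ℝ} (h : a • u = b • w) (ha : 0 < a) : u = w ∨ u = -w := by
    have hb : b ≠ 0 := by
      have := (eq_abs_and_eq_sign_smul_of_smul_eq_smul h hu hw ha).1
      rintro rfl; simp [this] at ha
    rw [(eq_abs_and_eq_sign_smul_of_smul_eq_smul h hu hw ha).2]
    rcases sign_eq_one_or_eq_neg_one hb with hs | hs <;> simp [hs]
  rcases ha.lt_or_gt with ha | ha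
  · exact sign_cases (a := -a) (b := -b) (by rw [neg_smul, neg_smul, h]) (neg_pos.2 ha)
  · exact sign_cases h ha

end UnitVectors

lemma HasDerivAt.unique_of_eqOn {F : Type*} [NormedAddCommGroup F] [NormedSpace ℝ F]
    {f g : ℝ → F} {f' g' : F} {U : Set ℝ} {s : ℝ} (hU : IsOpen U) (hs : s ∈ U)
    (hfg : EqOn f g U) (hf : HasDerivAt f f' s) (hg : HasDerivAt g g' s) : f' = g' :=
  hf.unique (hg.congr_of_eventuallyEq (hfg.eventuallyEq_of_mem (hU.mem_nhds hs)))
section Involute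

variable {V : Type*} [NormedAddCommGroup V] [InnerProductSpace ℝ V]

def involute (ξ T : ℝ → V) (c u : ℝ) : V := ξ u + (c - u) • T u

variable {ξ T N B E Tφ Nφ Bφ Eφ : ℝ → V} {κ k rκ c s : ℝ}

lemma hasDerivAt_involute (hξ : HasDerivAt ξ (T s) s) (hT : HasDerivAt T (κ • N s) s) :
    HasDerivAt (involute ξ T c) (((c - s) * κ) • N s) s := by
  refine (hξ.add (((hasDerivAt_const s c).sub (hasDerivAt_id s)).smul hT)).congr_deriv ?_
  simp only [Pi.sub_apply, id_eq]
  module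

lemma norm_deriv_involute (hξ : HasDerivAt ξ (T s) s) (hT : HasDerivAt T (κ • N s) s)
    (hN : ‖N s‖ = 1) (hκ : 0 < κ) (hs : s < c) :
    ‖deriv (involute ξ T c) s‖ = (c - s) * κ := by
  rw [(hasDerivAt_involute hξ hT).deriv, norm_smul, hN, mul_one, Real.norm_eq_abs,
    abs_of_pos (mul_pos (sub_pos.2 hs) hκ)]

lemma inv_norm_smul_deriv_involute (hξ : HasDerivAt ξ (T s) s)
    (hT : HasDerivAt T (κ • N s) s) (hN : ‖N s‖ = 1) (hκ : 0 < κ) (hs : s < c) :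
    ‖deriv (involute ξ T c) s‖⁻¹ • deriv (involute ξ T c) s = N s := by
  rw [norm_deriv_involute hξ hT hN hκ hs, (hasDerivAt_involute hξ hT).deriv, smul_smul,
    inv_mul_cancel₀ (mul_pos (sub_pos.2 hs) hκ).ne', one_smul]

variable {U : Set ℝ} {q ρ a κφ kφ rκφ σ : ℝ}

lemma involute_normal_eq (hU : IsOpen U) (hs : s ∈ U) (hTφ : EqOn Tφ N U)
    (hTφ' : HasDerivAt Tφ (a • Nφ s) s) (hN : HasDerivAt N (-κ • T s + k • B s) s)
    (ha : 0 < a) (hNφ1 : ‖Nφ s‖ = 1) (hT1 : ‖T s‖ = 1) (hB1 : ‖B s‖ = 1)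
    (hTB : ⟪T s, B s⟫ = 0) :
    a = √(κ ^ 2 + k ^ 2) ∧ Nφ s = (√(κ ^ 2 + k ^ 2))⁻¹ • (-κ • T s + k • B s) := by
  have hnorm : ‖-κ • T s + k • B s‖ = √(κ ^ 2 + k ^ 2) := by
    rw [norm_smul_add_smul_of_inner_eq_zero (-κ) k hT1 hB1 hTB, neg_sq]
  rw [← hnorm]
  exact eq_norm_and_eq_inv_norm_smul_of_smul_eq (hTφ'.unique_of_eqOn hU hs hTφ hN) hNφ1 ha

lemma involute_binormal_eq (hU : IsOpen U) (hs : s ∈ U)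
    (hNφ : EqOn Nφ (fun u => q⁻¹ • (-κ • T u + k • B u)) U)
    (hNφ' : HasDerivAt Nφ (ρ • (-κφ • Tφ s + kφ • Bφ s)) s)
    (hT : HasDerivAt T (κ • N s) s) (hB : HasDerivAt B (-k • N s + rκ • E s) s)
    (hTφ : Tφ s = N s) (hρκφ : ρ * κφ = q) (hq : q ^ 2 = κ ^ 2 + k ^ 2) (hq0 : 0 < q)
    (hk : 0 < k) (hρkφ : 0 < ρ * kφ) (hBφ1 : ‖Bφ s‖ = 1) (hE1 : ‖E s‖ = 1) :
    ρ * kφ = q⁻¹ * k * |rκ| ∧ Bφ s = (SignType.sign rκ : ℝ) • E s := by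
  have hderiv := hNφ'.unique_of_eqOn hU hs hNφ
    (((hT.const_smul (-κ)).add (hB.const_smul k)).const_smul q⁻¹)
  have h : (ρ * kφ) • Bφ s = (q⁻¹ * k * rκ) • E s := by
    have hsplit : (ρ * kφ) • Bφ s = ρ • (-κφ • Tφ s + kφ • Bφ s) + (ρ * κφ) • Tφ s := by
      module
    rw [hsplit, hderiv, hρκφ, hTφ]
    match_scalars
    · field_simp
      linear_combination hq
    · ring
  obtain ⟨h1, h2⟩ := eq_abs_and_eq_sign_smul_of_smul_eq_smul h hBφ1 hE1 hρkφ
  rw [abs_mul, abs_mul, abs_of_pos (inv_pos.2 hq0), abs_of_pos hk] at h1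
  rw [sign_mul, sign_mul, sign_pos (inv_pos.2 hq0), sign_pos hk] at h2
  exact ⟨h1, by simpa using h2⟩

lemma involute_trinormal_eq (hU : IsOpen U) (hs : s ∈ U) (hBφ : EqOn Bφ (fun u => σ • E u) U)
    (hBφ' : HasDerivAt Bφ (ρ • (-kφ • Nφ s + rκφ • Eφ s)) s) (hE : HasDerivAt E (-rκ • B s) s)
    (hNφ : Nφ s = q⁻¹ • (-κ • T s + k • B s)) (hρkφ : ρ * kφ = q⁻¹ * k * |rκ|)
    (hσ : σ * rκ = |rκ|) (hq : q ^ 2 = κ ^ 2 + k ^ 2) (hq0 : 0 < q) (hκ : 0 < κ)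
    (hrκ : rκ ≠ 0) (hEφ1 : ‖Eφ s‖ = 1) (hT1 : ‖T s‖ = 1) (hB1 : ‖B s‖ = 1)
    (hTB : ⟪T s, B s⟫ = 0) :
    Eφ s = q⁻¹ • (k • T s + κ • B s) ∨ Eφ s = -(q⁻¹ • (k • T s + κ • B s)) := by
  have hderiv := hBφ'.unique_of_eqOn hU hs hBφ (hE.const_smul σ)
  have h : (ρ * rκφ) • Eφ s = (-(|rκ| * κ / q)) • (q⁻¹ • (k • T s + κ • B s)) := by
    have hsplit : (ρ * rκφ) • Eφ s = ρ • (-kφ • Nφ s + rκφ • Eφ s) + (ρ * kφ) • Nφ s := by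
      module
    rw [hsplit, hderiv, hρkφ, hNφ]
    match_scalars
    · field_simp
      linear_combination (-q ^ 2) * hσ - |rκ| * hq
    · field_simp
  have hw : ‖q⁻¹ • (k • T s + κ • B s)‖ = 1 := by
    rw [norm_smul, norm_smul_add_smul_of_inner_eq_zero k κ hT1 hB1 hTB, add_comm, ← hq,
      Real.sqrt_sq hq0.le, Real.norm_eq_abs, abs_of_pos (inv_pos.2 hq0),
      inv_mul_cancel₀ hq0.ne']
  exact eq_or_eq_neg_of_smul_eq_smul h hEφ1 hw (neg_ne_zero.2 (by positivity))

end Involute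

theorem involute_frame_of_w_curve_general (ξ T N B E Tφ Nφ Bφ Eφ : ℝ → EuclideanSpace ℝ (Fin 4))
    (κ k rκ : ℝ) (κφ kφ rκφ : ℝ → ℝ) (c : ℝ)
    (hξ : ∀ s, HasDerivAt ξ (T s) s)
    (hT : ∀ s, HasDerivAt T (κ • N s) s)
    (hN : ∀ s, HasDerivAt N (-κ • T s + k • B s) s)
    (hB : ∀ s, HasDerivAt B (-k • N s + rκ • E s) s)
    (hE : ∀ s, HasDerivAt E (-rκ • B s) s)
    (hκ : 0 < κ) (hk : 0 < k)
    (hfr : ∀ s, ‖T s‖ = 1 ∧ ‖N s‖ = 1 ∧ ‖B s‖ = 1 ∧ ‖E s‖ = 1 ∧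
      ⟪T s, N s⟫ = (0 : ℝ) ∧ ⟪T s, B s⟫ = (0 : ℝ) ∧ ⟪T s, E s⟫ = (0 : ℝ) ∧
      ⟪N s, B s⟫ = (0 : ℝ) ∧ ⟪N s, E s⟫ = (0 : ℝ) ∧ ⟪B s, E s⟫ = (0 : ℝ))
    -- the Frenet frame of the involute `φ`
    (hTφ : ∀ s ∈ Set.Iio c, Tφ s =
      ‖deriv (fun u => ξ u + (c - u) • T u) s‖⁻¹ • deriv (fun u => ξ u + (c - u) • T u) s)
    (hTφ' : ∀ s ∈ Set.Iio c, HasDerivAt Tφ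
      ((‖deriv (fun u => ξ u + (c - u) • T u) s‖ * κφ s) • Nφ s) s)
    (hNφ' : ∀ s ∈ Set.Iio c, HasDerivAt Nφ
      (‖deriv (fun u => ξ u + (c - u) • T u) s‖ • (-κφ s • Tφ s + kφ s • Bφ s)) s)
    (hBφ' : ∀ s ∈ Set.Iio c, HasDerivAt Bφ
      (‖deriv (fun u => ξ u + (c - u) • T u) s‖ • (-kφ s • Nφ s + rκφ s • Eφ s)) s)
    (hκφ : ∀ s ∈ Set.Iio c, 0 < κφ s) (hkφ : ∀ s ∈ Set.Iio c, 0 < kφ s)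
    (hfrφ : ∀ s ∈ Set.Iio c, ‖Tφ s‖ = 1 ∧ ‖Nφ s‖ = 1 ∧ ‖Bφ s‖ = 1 ∧ ‖Eφ s‖ = 1 ∧
      ⟪Tφ s, Nφ s⟫ = (0 : ℝ) ∧ ⟪Tφ s, Bφ s⟫ = (0 : ℝ) ∧ ⟪Tφ s, Eφ s⟫ = (0 : ℝ) ∧
      ⟪Nφ s, Bφ s⟫ = (0 : ℝ) ∧ ⟪Nφ s, Eφ s⟫ = (0 : ℝ) ∧ ⟪Bφ s, Eφ s⟫ = (0 : ℝ)) :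
    ∀ s ∈ Set.Iio c,
      Tφ s = N s ∧
      Nφ s = (Real.sqrt (κ ^ 2 + k ^ 2))⁻¹ • (-κ • T s + k • B s) ∧
      (Bφ s = E s ∨ Bφ s = -E s) ∧
      (Eφ s = (Real.sqrt (κ ^ 2 + k ^ 2))⁻¹ • (k • T s + κ • B s) ∨
       Eφ s = -((Real.sqrt (κ ^ 2 + k ^ 2))⁻¹ • (k • T s + κ • B s))) := by
  set q := √(κ ^ 2 + k ^ 2)
  have hq : q ^ 2 = κ ^ 2 + k ^ 2 := Real.sq_sqrt (by positivity)
  have hq0 : 0 < q := Real.sqrt_pos.2 (by positivity)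
  have hρ : ∀ s ∈ Iio c, 0 < ‖deriv (fun u => ξ u + (c - u) • T u) s‖ := fun s hs =>
    (mul_pos (sub_pos.2 hs) hκ).trans_eq
      (norm_deriv_involute (hξ s) (hT s) (hfr s).2.1 hκ hs).symm
  have hTφN : EqOn Tφ N (Iio c) := fun s hs =>
    (hTφ s hs).trans (inv_norm_smul_deriv_involute (hξ s) (hT s) (hfr s).2.1 hκ hs)
  have hNφ (s) (hs : s ∈ Iio c) := involute_normal_eq isOpen_Iio hs hTφN (hTφ' s hs) (hN s)
    (mul_pos (hρ s hs) (hκφ s hs)) (hfrφ s hs).2.1 (hfr s).1 (hfr s).2.2.1 (hfr s).2.2.2.2.2.1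
  have hBφ (s) (hs : s ∈ Iio c) := involute_binormal_eq isOpen_Iio hs (fun u hu => (hNφ u hu).2)
    (hNφ' s hs) (hT s) (hB s) (hTφN hs) (hNφ s hs).1 hq hq0 hk (mul_pos (hρ s hs) (hkφ s hs))
    (hfrφ s hs).2.2.1 (hfr s).2.2.2.1
  have hrκ : rκ ≠ 0 := by
    have hc : c - 1 ∈ Iio c := by simp
    have h := (hBφ _ hc).1 ▸ mul_pos (hρ _ hc) (hkφ _ hc)
    exact abs_pos.1 (pos_of_mul_pos_right h (by positivity))
  intro s hs
  refine ⟨hTφN hs, (hNφ s hs).2, ?_, ?_⟩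
  · rcases sign_eq_one_or_eq_neg_one hrκ with h | h <;> simp [(hBφ s hs).2, h]
  · exact involute_trinormal_eq isOpen_Iio hs (fun u hu => (hBφ u hu).2) (hBφ' s hs) (hE s)
      (hNφ s hs).2 (hBφ s hs).1 (sign_mul_self rκ) hq hq0 hκ hrκ (hfrφ s hs).2.2.2.1 (hfr s).1
      (hfr s).2.2.1 (hfr s).2.2.2.2.2.1

/-- If `ξ` is a unit-speed curve in `ℝ⁴` with constant curvatures `κ > 0`,
`k > 0`, `r - κ` (a w-curve), then the Frenet frame of its involute
`φ(s) = ξ(s) + (c-s)T(s)` (for `s < c`) satisfies `T_φ = N`,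
`N_φ = (-κT + kB)/√(κ²+k²)`, `B_φ = ±E`, `E_φ = ±(kT + κB)/√(κ²+k²)`. -/
theorem involute_frame_of_w_curve (ξ T N B E Tφ Nφ Bφ Eφ : ℝ → EuclideanSpace ℝ (Fin 4))
    (κ k rκ : ℝ) (κφ kφ rκφ : ℝ → ℝ) (c : ℝ)
    (hξ : ∀ s, HasDerivAt ξ (T s) s)
    (hT : ∀ s, HasDerivAt T (κ • N s) s)
    (hN : ∀ s, HasDerivAt N (-κ • T s + k • B s) s)
    (hB : ∀ s, HasDerivAt B (-k • N s + rκ • E s) s)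
    (hE : ∀ s, HasDerivAt E (-rκ • B s) s)
    (hκ : 0 < κ) (hk : 0 < k)
    (hfr : ∀ s, ‖T s‖ = 1 ∧ ‖N s‖ = 1 ∧ ‖B s‖ = 1 ∧ ‖E s‖ = 1 ∧
      ⟪T s, N s⟫ = (0 : ℝ) ∧ ⟪T s, B s⟫ = (0 : ℝ) ∧ ⟪T s, E s⟫ = (0 : ℝ) ∧
      ⟪N s, B s⟫ = (0 : ℝ) ∧ ⟪N s, E s⟫ = (0 : ℝ) ∧ ⟪B s, E s⟫ = (0 : ℝ))
    -- the Frenet frame of the involute `φ`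
    (hTφ : ∀ s ∈ Set.Iio c, Tφ s =
      ‖deriv (fun u => ξ u + (c - u) • T u) s‖⁻¹ • deriv (fun u => ξ u + (c - u) • T u) s)
    (hTφ' : ∀ s ∈ Set.Iio c, HasDerivAt Tφ
      ((‖deriv (fun u => ξ u + (c - u) • T u) s‖ * κφ s) • Nφ s) s)
    (hNφ' : ∀ s ∈ Set.Iio c, HasDerivAt Nφ
      (‖deriv (fun u => ξ u + (c - u) • T u) s‖ • (-κφ s • Tφ s + kφ s • Bφ s)) s)
    (hBφ' : ∀ s ∈ Set.Iio c, HasDerivAt Bφ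
      (‖deriv (fun u => ξ u + (c - u) • T u) s‖ • (-kφ s • Nφ s + rκφ s • Eφ s)) s)
    (hEφ' : ∀ s ∈ Set.Iio c, HasDerivAt Eφ
      (‖deriv (fun u => ξ u + (c - u) • T u) s‖ • (-rκφ s • Bφ s)) s)
    (hκφ : ∀ s ∈ Set.Iio c, 0 < κφ s) (hkφ : ∀ s ∈ Set.Iio c, 0 < kφ s)
    (hfrφ : ∀ s ∈ Set.Iio c, ‖Tφ s‖ = 1 ∧ ‖Nφ s‖ = 1 ∧ ‖Bφ s‖ = 1 ∧ ‖Eφ s‖ = 1 ∧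
      ⟪Tφ s, Nφ s⟫ = (0 : ℝ) ∧ ⟪Tφ s, Bφ s⟫ = (0 : ℝ) ∧ ⟪Tφ s, Eφ s⟫ = (0 : ℝ) ∧
      ⟪Nφ s, Bφ s⟫ = (0 : ℝ) ∧ ⟪Nφ s, Eφ s⟫ = (0 : ℝ) ∧ ⟪Bφ s, Eφ s⟫ = (0 : ℝ)) :
    ∀ s ∈ Set.Iio c,
      Tφ s = N s ∧
      Nφ s = (Real.sqrt (κ ^ 2 + k ^ 2))⁻¹ • (-κ • T s + k • B s) ∧
      (Bφ s = E s ∨ Bφ s = -E s) ∧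
      (Eφ s = (Real.sqrt (κ ^ 2 + k ^ 2))⁻¹ • (k • T s + κ • B s) ∨
       Eφ s = -((Real.sqrt (κ ^ 2 + k ^ 2))⁻¹ • (k • T s + κ • B s))) :=
  involute_frame_of_w_curve_general ξ T N B E Tφ Nφ Bφ Eφ κ k rκ κφ kφ rκφ c hξ hT hN hB hE hκ hk
    hfr hTφ hTφ' hNφ' hBφ' hκφ hkφ hfrφ
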